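/- Define φ : ℝ → ℝ by φ(x) := x − x³/3, and for h > 0 set Φ(h) := ∬_{{(x,y) ∈ ℝ² : y < x}} exp( (2/h)·(φ(x) − φ(y)) ) dx dy. Then Φ(h) ~ (π h / 2)·exp( 8/(3h) ) as h → 0⁺, i.e. Φ(h)·(2/(πh))·exp(−8/(3h)) → 1. Consequently, for real λ → +∞, the double integral ∬_{{η < ξ}} exp( (2/3)(η³ − ξ³) + 2λ(ξ − η) ) dη dξ, which equals the squared Hilbert–Schmidt norm of the resolvent (𝔄⁺ − λ)^{-1} of the complex Airy operator D_x² + ix on L²(ℝ), is asymptotically (π/2)·λ^{-1/2}·exp( (8/3)λ^{3/2} ). -/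

import Mathlib

noncomputable section

open MeasureTheory

def φ (x : ℝ) : ℝ := x - x ^ 3 / 3

def Φ (h : ℝ) : ℝ :=
  ∫ p in {p : ℝ × ℝ | p.2 < p.1}, Real.exp ((2/h) * (φ p.1 - φ p.2))

/-! Writing `x = y + u`, the phase is `(2/h)(φ x - φ y) = (2/h)(u - u³/12) - (2u/h)(y + u/2)²`,
so the `y`-integral is Gaussian and `Φ h = √(πh/2) ∫_{u>0} u^{-1/2} exp((2/h)(u - u³/12)) du`.
The substitution `u = 2(1+s)²` absorbs the singularity `u^{-1/2}` into the Jacobian and moves the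
maximum `4/3` of `u - u³/12` (at `u = 2`) to `s = 0`; Laplace's method then gives the asymptotics.
The statement in `λ` follows from the scaling `(ξ, η) = √λ (x, y)`. -/

open Real Set Filter
open scoped ENNReal Topology Pointwise

theorem lintegral_setOf_snd_lt_fst {f : ℝ × ℝ → ℝ≥0∞} (hf : Measurable f) :
    ∫⁻ p in {p : ℝ × ℝ | p.2 < p.1}, f p = ∫⁻ u in Ioi 0, ∫⁻ y, f (u + y, y) := by
  have hshear : MeasurePreserving (fun q : ℝ × ℝ => (q.1 + q.2, q.2)) :=
    Measure.volume_eq_prod ℝ ℝ ▸ measurePreserving_add_prod volume volume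
  have hpre : (fun q : ℝ × ℝ => (q.1 + q.2, q.2)) ⁻¹' {p | p.2 < p.1} = Ioi 0 ×ˢ univ := by
    ext q; simp
  rw [← hshear.setLIntegral_comp_preimage (measurableSet_lt measurable_snd measurable_fst) hf,
    hpre, Measure.volume_eq_prod, setLIntegral_prod _ (by fun_prop)]
  simp only [Measure.restrict_univ]

theorem lintegral_Ioi_zero_eq_lintegral_Ioi_neg_one (g : ℝ → ℝ≥0∞) :
    ∫⁻ u in Ioi 0, g u = ∫⁻ s in Ioi (-1), ENNReal.ofReal (4 * (1 + s)) * g (2 * (1 + s) ^ 2) := by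
  have himage : (fun s : ℝ => 2 * (1 + s) ^ 2) '' Ioi (-1) = Ioi 0 := by
    ext u
    refine ⟨?_, fun hu => ⟨√(u / 2) - 1, ?_, ?_⟩⟩
    · rintro ⟨s, hs, rfl⟩
      have : 0 < 1 + s := by linarith [mem_Ioi.1 hs]
      exact mem_Ioi.2 (by positivity)
    · simpa using sqrt_pos.2 (half_pos (mem_Ioi.1 hu))
    · simp only [add_sub_cancel, sq_sqrt (half_pos (mem_Ioi.1 hu)).le]; ring
  have hinj : InjOn (fun s : ℝ => 2 * (1 + s) ^ 2) (Ioi (-1)) := by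
    intro s hs t ht hst
    have h1 : 0 < 1 + s := by linarith [mem_Ioi.1 hs]
    have h2 : 0 < 1 + t := by linarith [mem_Ioi.1 ht]
    nlinarith [hst]
  have hderiv (s : ℝ) : HasDerivAt (fun s : ℝ => 2 * (1 + s) ^ 2) (4 * (1 + s)) s :=
    ((((hasDerivAt_id' s).const_add 1).fun_pow 2).const_mul 2).congr_deriv (by ring)
  rw [← himage, lintegral_image_eq_lintegral_abs_deriv_mul measurableSet_Ioi
    (fun s _ => (hderiv s).hasDerivWithinAt) hinj]
  refine setLIntegral_congr_fun measurableSet_Ioi fun s hs => ?_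
  rw [abs_of_pos (by linarith [mem_Ioi.1 hs])]

theorem exp_neg_sq_mul_div_le {s r c h : ℝ} (hh : 0 < h) (hcr : c ≤ r) :
    exp (-(s ^ 2 * r) / h) ≤ exp (-(c / h) * s ^ 2) := by
  rw [exp_le_exp, neg_div, neg_mul, neg_le_neg_iff, div_mul_eq_mul_div, mul_comm c]
  gcongr

section Laplace

variable {R : ℝ → ℝ} {b c : ℝ}

theorem integrableOn_exp_neg_sq_mul_div (hR : Measurable R) (hc : 0 < c)
    (hRc : ∀ s ∈ Ioi (-b), c ≤ R s) {h : ℝ} (hh : 0 < h) :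
    IntegrableOn (fun s => exp (-(s ^ 2 * R s) / h)) (Ioi (-b)) := by
  refine (integrable_exp_neg_mul_sq (div_pos hc hh)).integrableOn.mono' (by fun_prop)
    ((ae_restrict_iff' measurableSet_Ioi).2 (.of_forall fun s hs => ?_))
  rw [norm_of_nonneg (exp_pos _).le]
  exact exp_neg_sq_mul_div_le hh (hRc s hs)

theorem inv_sqrt_mul_integral_Ioi_exp_neg_sq_mul_div {h : ℝ} (hh : 0 < h) :
    (√h)⁻¹ * ∫ s in Ioi (-b), exp (-(s ^ 2 * R s) / h) =
      ∫ t in Ioi (-b / √h), exp (-(t ^ 2 * R (√h * t))) := by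
  have hsh : 0 < √h := sqrt_pos.2 hh
  have hsub := integral_comp_mul_left_Ioi (fun s => exp (-(s ^ 2 * R s) / h)) (-b / √h) hsh
  rw [mul_div_cancel₀ _ hsh.ne', smul_eq_mul] at hsub
  rw [← hsub]
  refine integral_congr_ae (.of_forall fun t => ?_)
  simp only
  rw [mul_pow, sq_sqrt hh.le, mul_assoc, neg_div, mul_div_cancel_left₀ _ hh.ne']

theorem tendsto_inv_sqrt_mul_integral_Ioi_exp_neg_sq_mul_div (hb : 0 < b) (hc : 0 < c)
    (hR : Measurable R) (hRc : ∀ s ∈ Ioi (-b), c ≤ R s) (hR0 : ContinuousAt R 0) :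
    Tendsto (fun h => (√h)⁻¹ * ∫ s in Ioi (-b), exp (-(s ^ 2 * R s) / h)) (𝓝[>] 0)
      (𝓝 √(π / R 0)) := by
  have hsqrt : Tendsto (fun h : ℝ => √h) (𝓝[>] 0) (𝓝 0) := by
    simpa using (continuous_sqrt.tendsto 0).mono_left nhdsWithin_le_nhds
  have hlim : ∫ t, exp (-(t ^ 2 * R 0)) = √(π / R 0) := by
    simp_rw [← integral_gaussian, mul_comm _ (R 0), neg_mul]
  rw [← hlim]
  refine Tendsto.congr' (eventually_nhdsWithin_of_forall fun h hh =>
    (inv_sqrt_mul_integral_Ioi_exp_neg_sq_mul_div hh).symm) ?_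
  simp_rw [← integral_indicator measurableSet_Ioi]
  refine tendsto_integral_filter_of_dominated_convergence (fun t => exp (-c * t ^ 2))
    (.of_forall fun h => ?_) ?_ (integrable_exp_neg_mul_sq hc) (.of_forall fun t => ?_)
  · exact ((by fun_prop : Measurable fun t => exp (-(t ^ 2 * R (√h * t)))).indicator
      measurableSet_Ioi).aestronglyMeasurable
  · filter_upwards [self_mem_nhdsWithin] with h (hh : 0 < h)
    refine .of_forall fun t => ?_
    by_cases ht : t ∈ Ioi (-b / √h)
    · rw [indicator_of_mem ht, norm_of_nonneg (exp_pos _).le]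
      simpa using exp_neg_sq_mul_div_le one_pos
        (hRc _ ((div_lt_iff₀' (sqrt_pos.2 hh)).1 ht)) (s := t)
    · rw [indicator_of_notMem ht, norm_zero]; positivity
  · have hin : ∀ᶠ h in 𝓝[>] (0 : ℝ), t ∈ Ioi (-b / √h) := by
      filter_upwards [(hsqrt.mul_const t).eventually (lt_mem_nhds (by simpa using hb : -b < 0 * t)),
        self_mem_nhdsWithin] with h hbt (hh : 0 < h)
      exact (div_lt_iff₀' (sqrt_pos.2 hh)).2 hbt
    refine Tendsto.congr' (hin.mono fun h ht => (indicator_of_mem ht _).symm) ?_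
    exact ((hR0.tendsto.comp (by simpa using hsqrt.mul_const t)).const_mul (t ^ 2)).neg.rexp

end Laplace

theorem φ_add_sub (u y : ℝ) : φ (u + y) - φ y = u - u ^ 3 / 12 - u * (y + u / 2) ^ 2 := by
  unfold φ; ring

theorem lintegral_exp_mul_φ_add_sub {h u : ℝ} (hh : 0 < h) (hu : 0 < u) :
    ∫⁻ y, ENNReal.ofReal (exp (2 / h * (φ (u + y) - φ y))) =
      ENNReal.ofReal (√(π * h / (2 * u)) * exp (2 / h * (u - u ^ 3 / 12))) := by
  have hb : 0 < 2 * u / h := by positivity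
  have hsplit (y : ℝ) : exp (2 / h * (φ (u + y) - φ y)) =
      exp (2 / h * (u - u ^ 3 / 12)) * exp (-(2 * u / h) * (y + u / 2) ^ 2) := by
    rw [← exp_add, φ_add_sub]; ring_nf
  have hint : Integrable fun y => exp (2 / h * (φ (u + y) - φ y)) := by
    simp_rw [hsplit]
    exact ((integrable_exp_neg_mul_sq hb).comp_add_right (u / 2)).const_mul _
  rw [← ofReal_integral_eq_lintegral_ofReal hint (.of_forall fun y => (exp_pos _).le)]
  simp_rw [hsplit]
  rw [integral_const_mul, integral_add_right_eq_self (fun y => exp (-(2 * u / h) * y ^ 2)),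
    integral_gaussian, mul_comm]
  congr 3
  field_simp

def phaseGap (s : ℝ) : ℝ := 4 / 3 * (s + 2) ^ 2 * ((s + 1) ^ 2 + 2)

theorem two_mul_sub_cube_div_twelve (s : ℝ) :
    2 * (2 * (1 + s) ^ 2 - (2 * (1 + s) ^ 2) ^ 3 / 12) = 8 / 3 - s ^ 2 * phaseGap s := by
  unfold phaseGap; ring

theorem eight_thirds_le_phaseGap {s : ℝ} (hs : s ∈ Ioi (-1)) : 8 / 3 ≤ phaseGap s := by
  have hs : -1 < s := hs
  have h1 : 1 ≤ (s + 2) ^ 2 := by nlinarith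
  have h2 : 2 ≤ (s + 1) ^ 2 + 2 := by nlinarith [sq_nonneg (s + 1)]
  calc 8 / 3 = 4 / 3 * 1 * 2 := by norm_num
    _ ≤ phaseGap s := by unfold phaseGap; gcongr

theorem jacobian_mul_sqrt_mul_exp_eq {h s : ℝ} (hh : 0 < h) (hs : s ∈ Ioi (-1)) :
    4 * (1 + s) * (√(π * h / (2 * (2 * (1 + s) ^ 2))) *
        exp (2 / h * (2 * (1 + s) ^ 2 - (2 * (1 + s) ^ 2) ^ 3 / 12))) =
      2 * √(π * h) * exp (8 / (3 * h)) * exp (-(s ^ 2 * phaseGap s) / h) := by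
  have hs : 0 < 1 + s := neg_lt_iff_pos_add'.1 hs
  have hexp : 2 / h * (2 * (1 + s) ^ 2 - (2 * (1 + s) ^ 2) ^ 3 / 12) =
      8 / (3 * h) + -(s ^ 2 * phaseGap s) / h := by
    rw [div_mul_eq_mul_div, two_mul_sub_cube_div_twelve]; ring
  rw [show π * h / (2 * (2 * (1 + s) ^ 2)) = π * h / (2 * (1 + s)) ^ 2 by ring,
    sqrt_div' _ (sq_nonneg _), sqrt_sq (by positivity), hexp, exp_add]
  field_simp
  norm_num

theorem Φ_eq_integral_Ioi {h : ℝ} (hh : 0 < h) :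
    Φ h = 2 * √(π * h) * exp (8 / (3 * h)) *
      ∫ s in Ioi (-1), exp (-(s ^ 2 * phaseGap s) / h) := by
  have hmeas : Measurable phaseGap := by unfold phaseGap; fun_prop
  have hint := (integrableOn_exp_neg_sq_mul_div hmeas (by norm_num : (0:ℝ) < 8 / 3)
    (fun s hs => eight_thirds_le_phaseGap hs) hh).const_mul (2 * √(π * h) * exp (8 / (3 * h)))
  rw [← integral_const_mul, Φ,
    integral_eq_lintegral_of_nonneg_ae (.of_forall fun p => (exp_pos _).le) (by unfold φ; fun_prop),
    lintegral_setOf_snd_lt_fst (by unfold φ; fun_prop),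
    setLIntegral_congr_fun measurableSet_Ioi fun u hu => lintegral_exp_mul_φ_add_sub hh hu,
    lintegral_Ioi_zero_eq_lintegral_Ioi_neg_one,
    setLIntegral_congr_fun measurableSet_Ioi fun s hs => by
      rw [← ENNReal.ofReal_mul (by linarith [mem_Ioi.1 hs]), jacobian_mul_sqrt_mul_exp_eq hh hs],
    ← ofReal_integral_eq_lintegral_ofReal hint (.of_forall fun s => by positivity),
    ENNReal.toReal_ofReal (integral_nonneg fun s => by positivity)]

theorem tendsto_Φ_mul_two_div_pi_mul_exp :
    Tendsto (fun h => Φ h * (2 / (π * h)) * exp (-8 / (3 * h))) (𝓝[>] 0) (𝓝 1) := by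
  have hlap := tendsto_inv_sqrt_mul_integral_Ioi_exp_neg_sq_mul_div one_pos
    (by norm_num : (0:ℝ) < 8 / 3) (by unfold phaseGap; fun_prop)
    (fun s hs => eight_thirds_le_phaseGap hs) (by unfold phaseGap; fun_prop)
  have hlim : 4 / √π * √(π / phaseGap 0) = 1 := by
    rw [show phaseGap 0 = 4 ^ 2 by norm_num [phaseGap], sqrt_div' _ (sq_nonneg _),
      sqrt_sq (by norm_num)]
    field_simp [(sqrt_pos.2 pi_pos).ne']
  rw [← hlim]
  refine (hlap.const_mul (4 / √π)).congr' (eventually_nhdsWithin_of_forall fun h hh => ?_)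
  have hh : 0 < h := hh
  simp only
  rw [Φ_eq_integral_Ioi hh, sqrt_mul pi_pos.le, neg_div, exp_neg]
  field_simp [(sqrt_pos.2 pi_pos).ne', (sqrt_pos.2 hh).ne', (exp_pos (8 / (3 * h))).ne']
  rw [sq_sqrt pi_pos.le, sq_sqrt hh.le]; ring

theorem smul_setOf_snd_lt_fst {c : ℝ} (hc : 0 < c) :
    c • {p : ℝ × ℝ | p.2 < p.1} = {p : ℝ × ℝ | p.2 < p.1} := by
  ext p
  simp [mem_smul_set_iff_inv_smul_mem₀ hc.ne', hc]

theorem setIntegral_exp_cubic_eq_sq_mul_Φ {c : ℝ} (hc : 0 < c) :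
    ∫ p in {p : ℝ × ℝ | p.2 < p.1},
        exp ((2 / 3) * (p.2 ^ 3 - p.1 ^ 3) + 2 * c ^ 2 * (p.1 - p.2)) =
      c ^ 2 * Φ (c ^ 3)⁻¹ := by
  have hscale := Measure.setIntegral_comp_smul_of_pos volume
    (fun p : ℝ × ℝ => exp ((2 / 3) * (p.2 ^ 3 - p.1 ^ 3) + 2 * c ^ 2 * (p.1 - p.2)))
    {p : ℝ × ℝ | p.2 < p.1} hc
  rw [smul_setOf_snd_lt_fst hc, Module.finrank_prod, Module.finrank_self, smul_eq_mul] at hscale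
  rw [Φ, ← mul_inv_cancel_left₀ (pow_ne_zero 2 hc.ne') (∫ p in _, _), ← hscale]
  congr 1
  refine setIntegral_congr_fun (measurableSet_lt measurable_snd measurable_fst) fun p _ => ?_
  simp only [Prod.smul_fst, Prod.smul_snd, smul_eq_mul, φ]
  congr 1
  field_simp
  ring

theorem setIntegral_exp_cubic_div_eq {lam : ℝ} (hlam : 0 < lam) :
    (∫ p in {p : ℝ × ℝ | p.2 < p.1},
        exp ((2 / 3) * (p.2 ^ 3 - p.1 ^ 3) + 2 * lam * (p.1 - p.2))) /
      ((π / 2) * lam ^ (-(1:ℝ) / 2) * exp ((8 / 3) * lam ^ ((3:ℝ) / 2))) =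
    Φ (lam ^ ((3:ℝ) / 2))⁻¹ * (2 / (π * (lam ^ ((3:ℝ) / 2))⁻¹)) *
      exp (-8 / (3 * (lam ^ ((3:ℝ) / 2))⁻¹)) := by
  obtain ⟨c, hc, rfl⟩ : ∃ c > 0, lam = c ^ 2 := ⟨√lam, sqrt_pos.2 hlam, (sq_sqrt hlam.le).symm⟩
  have hpow (r : ℝ) : (c ^ 2) ^ r = c ^ (2 * r) := by
    rw [← rpow_natCast, ← rpow_mul hc.le]; norm_num
  rw [setIntegral_exp_cubic_eq_sq_mul_Φ hc, hpow, hpow, show 2 * ((3:ℝ) / 2) = (3 : ℕ) by norm_num,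
    show 2 * (-(1:ℝ) / 2) = -1 by norm_num, rpow_natCast, rpow_neg_one, neg_div, exp_neg]
  field_simp [(exp_pos (8 / 3 * c ^ 3)).ne']

/-- `Φ(h) ~ (πh/2) exp(8/(3h))` as `h → 0⁺`; consequently, as real `λ → +∞`, the squared
Hilbert–Schmidt norm `∬_{η<ξ} exp((2/3)(η³−ξ³) + 2λ(ξ−η)) dη dξ` of the resolvent of the
complex Airy operator on `L²(ℝ)` is asymptotically `(π/2) λ^{-1/2} exp((8/3) λ^{3/2})`. -/
theorem Phi_asymptotics :
    Filter.Tendsto (fun h : ℝ => Φ h * (2 / (Real.pi * h)) * Real.exp (-8 / (3 * h)))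
      (nhdsWithin 0 (Set.Ioi 0)) (nhds 1)
    ∧ Filter.Tendsto (fun lam : ℝ =>
        (∫ p in {p : ℝ × ℝ | p.2 < p.1},
            Real.exp ((2/3) * (p.2 ^ 3 - p.1 ^ 3) + 2 * lam * (p.1 - p.2))) /
          ((Real.pi / 2) * lam ^ (-(1:ℝ)/2) * Real.exp ((8/3) * lam ^ ((3:ℝ)/2))))
        Filter.atTop (nhds 1) := by
  refine ⟨tendsto_Φ_mul_two_div_pi_mul_exp, ?_⟩
  have hh : Tendsto (fun lam : ℝ => (lam ^ ((3:ℝ) / 2))⁻¹) atTop (𝓝[>] 0) :=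
    tendsto_inv_atTop_nhdsGT_zero.comp (tendsto_rpow_atTop (by norm_num))
  exact (tendsto_Φ_mul_two_div_pi_mul_exp.comp hh).congr'
    ((eventually_gt_atTop 0).mono fun lam hlam => (setIntegral_exp_cubic_div_eq hlam).symm)

end
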